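/- arXiv:1808.10535 — 5 statements merged into one kernel-verified Lean document; each statement's English description precedes it below -/
import Mathlib

section
/- Let m ∈ ℕ and let L_k denote the k-fold iterated natural logarithm (L₁(t) = ln t, L_{k+1}(t) = ln(L_k(t))), and 𝓛_m(t) = (L₁(t),…,L_m(t)). Let Q₀(z) = Σ_α c_α z^α be a real polynomial in m variables (sum over finitely many multi-indices α ∈ ℕ₀^m), let α* = (α*₁,…,α*_m) be the largest multi-index with c_{α*} ≠ 0 in the lexicographic order, and assume |α*| ≥ 1 and c_{α*} > 0. Let Q₁ be a real polynomial in one variable of degree d ≥ 1 with positive leading coefficient, and let β > 0. Define ω(t) = Q₀(𝓛_m(Q₁(t^β))), which is positive on [T*,∞) for some T* > 0 and tends to ∞ as t → ∞. Then for every λ > 0, lim_{t→∞} ω(t)^{−λ} · Π_{k=1}^m L_k(t)^{λ α*_k} = ( c_{α*} (βd)^{α*₁} )^{−λ}. -/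
open Filter

noncomputable def iterLog : ℕ → ℝ → ℝ
  | 0, t => t
  | k + 1, t => Real.log (iterLog k t)

/-!
If `u / v → c > 0` and `v → ∞`, then `log u / log v → 1`. Since `log Q₁(t^β) / log t → βd`, the
iterated logarithms of `X = Q₁(t^β)` and of `t` therefore have ratio `βd` at level one and `1` at
every higher level. On the other hand each lexicographically smaller monomial in `(L₁, …, L_m)` is
`o` of the leading one: at the first differing index `i` it loses a factor `L_{i+1}`, while all
later factors are at most powers of `L_{i+2} = log L_{i+1}`. Hence
`ω(t) ~ c_{α*} ∏ L_k(X)^{α*_k} ~ c_{α*} (βd)^{α*₁} ∏ L_k(t)^{α*_k}`.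
-/

open Topology Real Polynomial

/-- The monomial `z ^ α` evaluated at `z = (L₁ x, …, L_m x)`. -/
noncomputable def logMonomial {m : ℕ} (α : Fin m → ℕ) (x : ℝ) : ℝ :=
  ∏ i : Fin m, iterLog ((i : ℕ) + 1) x ^ α i

theorem tendsto_iterLog_atTop (k : ℕ) : Tendsto (iterLog k) atTop atTop := by
  induction k with
  | zero => exact tendsto_id
  | succ k ih => exact tendsto_log_atTop.comp ih

theorem eventually_one_le_iterLog (n : ℕ) : ∀ᶠ x in atTop, ∀ k ≤ n, 1 ≤ iterLog k x :=
  (eventually_all_finite (Set.finite_Iic n)).2 fun k _ =>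
    (tendsto_iterLog_atTop k).eventually_ge_atTop 1

theorem iterLog_le_iterLog {x : ℝ} {a b : ℕ} (hab : a ≤ b) (h : ∀ k < b, 0 ≤ iterLog k x) :
    iterLog b x ≤ iterLog a x := by
  induction b, hab using Nat.le_induction with
  | base => rfl
  | succ b _ ih => exact (log_le_self (h b b.lt_succ_self)).trans (ih fun k hk => h k (by omega))

theorem tendsto_log_div_log_of_tendsto_div {ι : Type*} {l : Filter ι} {u v : ι → ℝ} {c : ℝ}
    (hc : 0 < c) (huv : Tendsto (fun t => u t / v t) l (𝓝 c)) (hv : Tendsto v l atTop) :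
    Tendsto (fun t => log (u t) / log (v t)) l (𝓝 1) := by
  have hlogv := tendsto_log_atTop.comp hv
  have h := (((continuousAt_log hc.ne').tendsto.comp huv).div_atTop hlogv).const_add 1
  rw [add_zero] at h
  refine h.congr' ?_
  filter_upwards [hv.eventually_gt_atTop 0, huv.eventually (eventually_gt_nhds hc),
    hlogv.eventually_gt_atTop 0] with t hv0 huv0 hlogv0
  have hu0 : u t ≠ 0 := by
    rintro hu
    simp [hu] at huv0
  simp only [Function.comp_apply, log_div hu0 hv0.ne'] at hlogv0 ⊢
  field_simp
  ring

theorem Polynomial.tendsto_log_eval_div_log {P : ℝ[X]} (hd : 0 < P.natDegree)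
    (hlc : 0 < P.leadingCoeff) :
    Tendsto (fun x => log (P.eval x) / log x) atTop (𝓝 P.natDegree) := by
  have hdiv : Tendsto (fun x => P.eval x / x ^ P.natDegree) atTop (𝓝 P.leadingCoeff) := by
    simpa using P.div_tendsto_atTop_leadingCoeff_div_of_degree_eq (X ^ P.natDegree)
      (by rw [degree_X_pow, degree_eq_natDegree (leadingCoeff_ne_zero.1 hlc.ne')])
  have h := (tendsto_log_div_log_of_tendsto_div hlc hdiv
    (tendsto_pow_atTop hd.ne')).const_mul (P.natDegree : ℝ)
  rw [mul_one] at h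
  refine h.congr' ?_
  filter_upwards [eventually_gt_atTop 1] with x hx
  rw [log_pow]
  field_simp [(log_pos hx).ne']

theorem tendsto_iterLog_div_iterLog {ι : Type*} {l : Filter ι} {f g : ι → ℝ} {a : ℝ}
    (ha : 0 < a) (hfg : Tendsto (fun t => log (f t) / log (g t)) l (𝓝 a))
    (hg : Tendsto g l atTop) (k : ℕ) :
    Tendsto (fun t => iterLog (k + 2) (f t) / iterLog (k + 2) (g t)) l (𝓝 1) := by
  induction k with
  | zero => exact tendsto_log_div_log_of_tendsto_div ha hfg ((tendsto_iterLog_atTop 1).comp hg)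
  | succ k ih =>
    exact tendsto_log_div_log_of_tendsto_div one_pos ih ((tendsto_iterLog_atTop (k + 2)).comp hg)

theorem tendsto_logMonomial_div_logMonomial {ι : Type*} {l : Filter ι} {f g : ι → ℝ} {a : ℝ}
    (ha : 0 < a) (hfg : Tendsto (fun t => log (f t) / log (g t)) l (𝓝 a))
    (hg : Tendsto g l atTop) {n : ℕ} (α : Fin (n + 1) → ℕ) :
    Tendsto (fun t => logMonomial α (f t) / logMonomial α (g t)) l (𝓝 (a ^ α 0)) := by
  have hhigher : Tendsto (fun t => ∏ j : Fin n,
      (iterLog ((j : ℕ) + 2) (f t) / iterLog ((j : ℕ) + 2) (g t)) ^ α j.succ) l (𝓝 1) := by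
    simpa using tendsto_finsetProd Finset.univ fun (j : Fin n) _ =>
      (tendsto_iterLog_div_iterLog ha hfg hg j).pow (α j.succ)
  have h := (hfg.pow (α 0)).mul hhigher
  rw [mul_one] at h
  refine h.congr fun t => ?_
  rw [logMonomial, logMonomial, ← Finset.prod_div_distrib, Fin.prod_univ_succ]
  simp only [div_pow, Fin.val_zero, Fin.val_succ]
  rfl

theorem one_le_logMonomial {m : ℕ} (α : Fin m → ℕ) {x : ℝ}
    (hx : ∀ i : Fin m, 1 ≤ iterLog ((i : ℕ) + 1) x) : 1 ≤ logMonomial α x :=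
  Finset.one_le_prod fun i _ => one_le_pow₀ (hx i)

theorem eventually_one_le_logMonomial {m : ℕ} (α : Fin m → ℕ) :
    ∀ᶠ x in atTop, 1 ≤ logMonomial α x := by
  filter_upwards [eventually_one_le_iterLog m] with x hx
  exact one_le_logMonomial α fun i => hx _ i.is_lt

theorem tendsto_logMonomial_atTop {m : ℕ} {α : Fin m → ℕ} (hα : α ≠ 0) :
    Tendsto (logMonomial α) atTop atTop := by
  obtain ⟨i, hi⟩ := Function.ne_iff.1 hα
  refine tendsto_atTop_mono' atTop ?_ (tendsto_iterLog_atTop ((i : ℕ) + 1))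
  filter_upwards [eventually_one_le_iterLog m] with x hx
  have hL : ∀ j : Fin m, 1 ≤ iterLog ((j : ℕ) + 1) x := fun j => hx _ j.is_lt
  calc iterLog ((i : ℕ) + 1) x ≤ iterLog ((i : ℕ) + 1) x ^ α i := le_self_pow₀ (hL i) hi
    _ = ∏ j ∈ {i}, iterLog ((j : ℕ) + 1) x ^ α j := (Finset.prod_singleton _ _).symm
    _ ≤ logMonomial α x :=
      Finset.prod_le_prod_of_subset_of_one_le (Finset.subset_univ _)
        (fun j _ => pow_nonneg (zero_le_one.trans (hL j)) _) fun j _ _ => one_le_pow₀ (hL j)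

theorem logMonomial_div_le {m : ℕ} {α α' : Fin m → ℕ} {i : Fin m}
    (heq : ∀ j < i, α j = α' j) (hlt : α i < α' i) {x : ℝ}
    (hx : ∀ k ≤ m + 1, 1 ≤ iterLog k x) :
    logMonomial α x / logMonomial α' x ≤
      (iterLog ((i : ℕ) + 1) x)⁻¹ * log (iterLog ((i : ℕ) + 1) x) ^ ((∑ j, α j) * m) := by
  set N := ∑ j, α j
  set y := iterLog ((i : ℕ) + 1) x
  have hL : ∀ j : Fin m, 1 ≤ iterLog ((j : ℕ) + 1) x := fun j => hx _ (by omega)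
  have hy : 1 ≤ y := hL i
  have hlogy : 1 ≤ log y := hx ((i : ℕ) + 2) (by omega)
  have hfactor : ∀ j : Fin m, iterLog ((j : ℕ) + 1) x ^ α j / iterLog ((j : ℕ) + 1) x ^ α' j ≤
      (if j = i then y⁻¹ else 1) * log y ^ N := by
    intro j
    have hLj := hL j
    rcases lt_trichotomy j i with hji | rfl | hij
    · rw [heq j hji, div_self (by positivity), if_neg hji.ne, one_mul]
      exact one_le_pow₀ hlogy
    · obtain ⟨k, hk⟩ : ∃ k, α' j = α j + k + 1 := ⟨α' j - α j - 1, by omega⟩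
      rw [if_pos rfl, hk]
      calc y ^ α j / y ^ (α j + k + 1) = (y ^ k)⁻¹ * y⁻¹ := by
            rw [pow_add, pow_add, pow_one]; field_simp
        _ ≤ y⁻¹ := mul_le_of_le_one_left (by positivity) (inv_le_one_of_one_le₀ (one_le_pow₀ hy))
        _ ≤ y⁻¹ * log y ^ N := le_mul_of_one_le_right (by positivity) (one_le_pow₀ hlogy)
    · rw [if_neg hij.ne', one_mul]
      calc iterLog ((j : ℕ) + 1) x ^ α j / iterLog ((j : ℕ) + 1) x ^ α' j
          ≤ iterLog ((j : ℕ) + 1) x ^ α j := div_le_self (by positivity) (one_le_pow₀ hLj)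
        _ ≤ log y ^ α j := by
          gcongr
          exact iterLog_le_iterLog (by omega : (i : ℕ) + 2 ≤ (j : ℕ) + 1)
            fun k hk => zero_le_one.trans (hx k (by omega))
        _ ≤ log y ^ N :=
          pow_le_pow_right₀ hlogy (Finset.single_le_sum (by simp) (Finset.mem_univ j))
  calc logMonomial α x / logMonomial α' x
      = ∏ j : Fin m, iterLog ((j : ℕ) + 1) x ^ α j / iterLog ((j : ℕ) + 1) x ^ α' j :=
        (Finset.prod_div_distrib _ _).symm
    _ ≤ ∏ j : Fin m, (if j = i then y⁻¹ else 1) * log y ^ N :=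
        Finset.prod_le_prod (fun j _ => by have := hL j; positivity) fun j _ => hfactor j
    _ = y⁻¹ * log y ^ (N * m) := by
        rw [Finset.prod_mul_distrib, Fintype.prod_ite_eq', Finset.prod_const, Finset.card_univ,
          Fintype.card_fin, pow_mul]

theorem tendsto_logMonomial_div_of_toLex_lt {m : ℕ} {α α' : Fin m → ℕ}
    (h : toLex α < toLex α') :
    Tendsto (fun x => logMonomial α x / logMonomial α' x) atTop (𝓝 0) := by
  obtain ⟨i, heq, hlt⟩ := h
  have hbound : Tendsto (fun y => y⁻¹ * log y ^ ((∑ j, α j) * m)) atTop (𝓝 0) := by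
    simpa [div_eq_inv_mul] using tendsto_pow_log_div_mul_add_atTop 1 0 _ one_ne_zero
  refine tendsto_of_tendsto_of_tendsto_of_le_of_le' tendsto_const_nhds
    (hbound.comp (tendsto_iterLog_atTop ((i : ℕ) + 1))) ?_ ?_
  · filter_upwards [eventually_one_le_logMonomial α, eventually_one_le_logMonomial α']
      with x h h' using by positivity
  · filter_upwards [eventually_one_le_iterLog (m + 1)] with x hx
    exact logMonomial_div_le heq hlt hx

theorem tendsto_sum_mul_logMonomial_div_logMonomial {m : ℕ} {A : Finset (Fin m → ℕ)}
    {c : (Fin m → ℕ) → ℝ} {α' : Fin m → ℕ} (hα' : α' ∈ A)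
    (hmax : ∀ α ∈ A, c α ≠ 0 → α ≠ α' → toLex α < toLex α') :
    Tendsto (fun x => (∑ α ∈ A, c α * logMonomial α x) / logMonomial α' x) atTop (𝓝 (c α')) := by
  have hterm : ∀ α ∈ A, Tendsto (fun x => c α * (logMonomial α x / logMonomial α' x)) atTop
      (𝓝 (if α' = α then c α else 0)) := by
    intro α hα
    by_cases he : α' = α
    · subst he
      rw [if_pos rfl]
      refine tendsto_const_nhds.congr' ?_
      filter_upwards [eventually_one_le_logMonomial α'] with x hx
      rw [div_self (by positivity), mul_one]
    · rw [if_neg he]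
      by_cases hc : c α = 0
      · simp [hc]
      simpa using (tendsto_logMonomial_div_of_toLex_lt (hmax α hα hc (Ne.symm he))).const_mul (c α)
  have h := tendsto_finsetSum A hterm
  rw [Finset.sum_ite_eq A α' c, if_pos hα'] at h
  simpa only [Finset.sum_div, mul_div_assoc] using h

theorem logMonomial_rpow {m : ℕ} (α : Fin m → ℕ) {x : ℝ}
    (hx : ∀ i : Fin m, 0 ≤ iterLog ((i : ℕ) + 1) x) (r : ℝ) :
    logMonomial α x ^ r = ∏ i : Fin m, iterLog ((i : ℕ) + 1) x ^ (r * α i) := by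
  rw [logMonomial, ← finsetProd_rpow _ _ fun i _ => pow_nonneg (hx i) _]
  refine Finset.prod_congr rfl fun i _ => ?_
  rw [← rpow_natCast, ← rpow_mul (hx i), mul_comm]

theorem tendsto_sum_mul_logMonomial_atTop {m : ℕ} {A : Finset (Fin m → ℕ)}
    {c : (Fin m → ℕ) → ℝ} {α' : Fin m → ℕ} (hα' : α' ∈ A) (hc : 0 < c α') (hα'0 : α' ≠ 0)
    (hmax : ∀ α ∈ A, c α ≠ 0 → α ≠ α' → toLex α < toLex α') :
    Tendsto (fun x => ∑ α ∈ A, c α * logMonomial α x) atTop atTop := by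
  refine ((tendsto_sum_mul_logMonomial_div_logMonomial hα' hmax).pos_mul_atTop hc
    (tendsto_logMonomial_atTop hα'0)).congr' ?_
  filter_upwards [eventually_one_le_logMonomial α'] with x hx
  exact div_mul_cancel₀ _ (by positivity)

theorem Polynomial.tendsto_log_eval_rpow_div_log {P : ℝ[X]} (hd : 0 < P.natDegree)
    (hlc : 0 < P.leadingCoeff) {β : ℝ} (hβ : 0 < β) :
    Tendsto (fun t => log (P.eval (t ^ β)) / log t) atTop (𝓝 (β * P.natDegree)) := by
  refine (((tendsto_log_eval_div_log hd hlc).comp (tendsto_rpow_atTop hβ)).const_mul β).congr' ?_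
  filter_upwards [eventually_gt_atTop 1] with t ht
  simp only [Function.comp_apply, log_rpow (zero_lt_one.trans ht)]
  field_simp

theorem stmt5 (m : ℕ) (hm : 0 < m)
    (A : Finset (Fin m → ℕ)) (c : (Fin m → ℕ) → ℝ)
    (αs : Fin m → ℕ) (hαsA : αs ∈ A) (hcαs : 0 < c αs)
    (hdeg : 1 ≤ ∑ i, αs i)
    (hmax : ∀ α ∈ A, c α ≠ 0 → α ≠ αs →
      ∃ i : Fin m, (∀ j : Fin m, j < i → α j = αs j) ∧ α i < αs i)
    (Q₁ : Polynomial ℝ) (hd : 1 ≤ Q₁.natDegree) (hlc : 0 < Q₁.leadingCoeff)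
    (β : ℝ) (hβ : 0 < β)
    (ω : ℝ → ℝ)
    (hω : ∀ t : ℝ, ω t = ∑ α ∈ A, c α * ∏ i : Fin m,
      (iterLog ((i : ℕ) + 1) (Q₁.eval (t ^ β))) ^ (α i)) :
    (∃ T > (0:ℝ), (∀ t ≥ T, 0 < ω t) ∧ Tendsto ω atTop atTop) ∧
    ∀ lam > (0:ℝ),
      Tendsto
        (fun t : ℝ =>
          ω t ^ (-lam) * ∏ i : Fin m, iterLog ((i : ℕ) + 1) t ^ (lam * (αs i : ℝ)))
        atTop
        (nhds ((c αs * (β * (Q₁.natDegree : ℝ)) ^ (αs ⟨0, hm⟩)) ^ (-lam))) := by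
  obtain ⟨n, rfl⟩ : ∃ n, m = n + 1 := ⟨m - 1, by omega⟩
  set X := fun t : ℝ => Q₁.eval (t ^ β)
  have hX : Tendsto X atTop atTop :=
    (Q₁.tendsto_atTop_of_leadingCoeff_nonneg (natDegree_pos_iff_degree_pos.1 hd) hlc.le).comp
      (tendsto_rpow_atTop hβ)
  have hαs : αs ≠ 0 := by rintro rfl; simp at hdeg
  have hωtop : Tendsto ω atTop atTop :=
    ((tendsto_sum_mul_logMonomial_atTop hαsA hcαs hαs hmax).comp hX).congr fun t => (hω t).symm
  refine ⟨?_, fun lam _ => ?_⟩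
  · obtain ⟨T, hT⟩ := (hωtop.eventually_gt_atTop 0).exists_forall_of_atTop
    exact ⟨max T 1, by positivity, fun t ht => hT t (le_of_max_le_left ht), hωtop⟩
  have hratio := ((tendsto_sum_mul_logMonomial_div_logMonomial hαsA hmax).comp hX).mul
    (tendsto_logMonomial_div_logMonomial (by positivity) (tendsto_log_eval_rpow_div_log hd hlc hβ)
      tendsto_id αs)
  refine (hratio.rpow_const (Or.inl (by positivity))).congr' ?_
  filter_upwards [eventually_one_le_iterLog (n + 1),
    hX.eventually (eventually_one_le_logMonomial αs), hωtop.eventually_gt_atTop 0]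
    with t ht hDX hωt
  have hL : ∀ i : Fin (n + 1), 1 ≤ iterLog ((i : ℕ) + 1) t := fun i => ht _ i.is_lt
  have hD := one_le_logMonomial αs hL
  rw [Function.comp_apply, div_mul_div_cancel₀ (by positivity),
    ← logMonomial_rpow αs fun i => zero_le_one.trans (hL i),
    show ∑ α ∈ A, c α * logMonomial α (X t) = ω t from (hω t).symm,
    div_rpow hωt.le (by positivity), div_eq_mul_inv, ← rpow_neg (by positivity), neg_neg]
end

section
/- Let T* ≥ 0 and let φ : [T*,∞) → (0,∞) satisfy φ(t) → 0 as t → ∞. Let (λₙ)ₙ≥₁ be a strictly increasing sequence of positive numbers diverging to ∞, and suppose there exists M > 1 such that Σ_{n=1}^∞ M^{−λₙ} < ∞. Let (X,‖·‖) be a Banach space and (ξₙ)ₙ≥₁ ⊂ X with ‖ξₙ‖ ≤ c₀ κ^{λₙ} for all n, for some constants c₀, κ > 0. Then there exists T₀ ≥ T* such that the series Σ_{n=1}^∞ ξₙ φ(t)^{λₙ} converges absolutely and uniformly on [T₀,∞); moreover, denoting its sum by g(t), for every N ∈ ℕ there exist C_N > 0 and T_N ≥ T₀ such that ‖g(t)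 − Σ_{n=1}^N ξₙ φ(t)^{λₙ}‖ ≤ C_N φ(t)^{λ_{N+1}} for all t ≥ T_N. -/
open Filter Topology Real

/-! Once `κ φ(t) ≤ 1/M`, the `n`-th term is at most `c₀ (κ φ(t))^{λₙ} ≤ c₀ M^{-λₙ}`, a summable
majorant independent of `t`, so the Weierstrass M-test gives absolute and uniform convergence.
For the remainder after `N` terms, split `(κ φ)^{λₙ} = (κ φ)^{λ_N} (κ φ)^{λₙ - λ_N}` and bound
the second factor by `M^{λ_N - λₙ}`: the tail is `φ^{λ_N}` times a tail of `∑ M^{-λₙ}`. -/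

lemma rpow_le_mul_rpow_mul_rpow_neg {q M a b : ℝ} (hq : 0 < q) (hM : 0 < M) (hqM : q ≤ M⁻¹)
    (hab : a ≤ b) : q ^ b ≤ (q * M) ^ a * M ^ (-b) :=
  calc q ^ b = q ^ a * q ^ (b - a) := by rw [← rpow_add hq, add_sub_cancel]
    _ ≤ q ^ a * M⁻¹ ^ (b - a) := by gcongr
    _ = (q * M) ^ a * M ^ (-b) := by
      rw [mul_rpow hq.le hM.le, inv_rpow hM.le, ← rpow_neg hM.le, mul_assoc, ← rpow_add hM]
      ring_nf

lemma norm_rpow_smul_le {X : Type*} [NormedAddCommGroup X] [NormedSpace ℝ X] {s κ M c₀ a b : ℝ}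
    {x : X} (hs : 0 < s) (hκ : 0 < κ) (hM : 0 < M) (hc₀ : 0 ≤ c₀) (hsM : κ * s ≤ M⁻¹)
    (hab : a ≤ b) (hx : ‖x‖ ≤ c₀ * κ ^ b) :
    ‖s ^ b • x‖ ≤ c₀ * ((κ * s * M) ^ a * M ^ (-b)) :=
  calc ‖s ^ b • x‖ = s ^ b * ‖x‖ := norm_smul_of_nonneg (rpow_nonneg hs.le b) x
    _ ≤ s ^ b * (c₀ * κ ^ b) := by gcongr
    _ = c₀ * (κ * s) ^ b := by rw [mul_rpow hκ.le hs.le]; ring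
    _ ≤ c₀ * ((κ * s * M) ^ a * M ^ (-b)) := by
      gcongr; exact rpow_le_mul_rpow_mul_rpow_neg (by positivity) hM hsM hab

lemma norm_tsum_sub_sum_range_le {X : Type*} [NormedAddCommGroup X] [CompleteSpace X]
    {f : ℕ → X} {g : ℕ → ℝ} (N : ℕ) (hg : Summable g) (hfg : ∀ i, ‖f (i + N)‖ ≤ g i) :
    ‖∑' n, f n - ∑ n ∈ Finset.range N, f n‖ ≤ ∑' i, g i := by
  have hf : Summable f := (summable_nat_add_iff N).1 (hg.of_norm_bounded hfg)
  rw [← hf.sum_add_tsum_nat_add N, add_sub_cancel_left]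
  exact tsum_of_norm_bounded hg.hasSum hfg

theorem stmt11_general {X : Type*} [NormedAddCommGroup X] [NormedSpace ℝ X] [CompleteSpace X]
    (Tstar : ℝ) (φ : ℝ → ℝ)
    (hφpos : ∀ t ≥ Tstar, 0 < φ t)
    (hφ0 : Tendsto φ atTop (nhds 0))
    (lam : ℕ → ℝ) (hlampos : ∀ n, 0 < lam n) (hlammono : StrictMono lam)
    (M : ℝ) (hM : 1 < M) (hMsum : Summable (fun n : ℕ => M ^ (-lam n)))
    (ξ : ℕ → X) (c₀ κ : ℝ) (hc₀ : 0 < c₀) (hκ : 0 < κ)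
    (hξ : ∀ n : ℕ, ‖ξ n‖ ≤ c₀ * κ ^ lam n) :
    ∃ T₀ ≥ Tstar,
      (∀ t ≥ T₀, Summable (fun n : ℕ => ‖ξ n‖ * φ t ^ lam n)) ∧
      TendstoUniformlyOn
        (fun (N : ℕ) (t : ℝ) => ∑ n ∈ Finset.range N, φ t ^ lam n • ξ n)
        (fun t : ℝ => ∑' n : ℕ, φ t ^ lam n • ξ n) atTop (Set.Ici T₀) ∧
      ∀ N : ℕ, ∃ C > (0:ℝ), ∃ T ≥ T₀, ∀ t ≥ T,
        ‖(∑' n : ℕ, φ t ^ lam n • ξ n) - ∑ n ∈ Finset.range N, φ t ^ lam n • ξ n‖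
          ≤ C * φ t ^ lam N := by
  have hM0 : 0 < M := one_pos.trans hM
  obtain ⟨T₀, hT₀, hgood⟩ : ∃ T₀ ≥ Tstar, ∀ t ≥ T₀, 0 < φ t ∧ κ * φ t ≤ M⁻¹ := by
    have hκφ : Tendsto (fun t => κ * φ t) atTop (𝓝 0) := by simpa using hφ0.const_mul κ
    obtain ⟨T₁, hT₁⟩ := eventually_atTop.1 (hκφ.eventually (eventually_le_nhds (inv_pos.2 hM0)))
    exact ⟨max Tstar T₁, le_max_left _ _, fun t ht =>
      ⟨hφpos t (le_of_max_le_left ht), hT₁ t (le_of_max_le_right ht)⟩⟩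
  have hterm : ∀ t ≥ T₀, ∀ a n, a ≤ lam n →
      ‖φ t ^ lam n • ξ n‖ ≤ c₀ * ((κ * φ t * M) ^ a * M ^ (-lam n)) := fun t ht a n han =>
    norm_rpow_smul_le (hgood t ht).1 hκ hM0 hc₀.le (hgood t ht).2 han (hξ n)
  have hmajor : ∀ t ≥ T₀, ∀ n, ‖φ t ^ lam n • ξ n‖ ≤ c₀ * M ^ (-lam n) := fun t ht n => by
    simpa using hterm t ht 0 n (hlampos n).le
  refine ⟨T₀, hT₀, fun t ht => ?_,
    tendstoUniformlyOn_tsum_nat (hMsum.mul_left c₀) fun n t ht => hmajor t ht n, fun N => ?_⟩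
  · have hφt := (hgood t ht).1
    refine (hMsum.mul_left c₀).of_nonneg_of_le (fun n => by positivity) fun n => ?_
    rw [mul_comm, ← norm_smul_of_nonneg (rpow_nonneg hφt.le _)]
    exact hmajor t ht n
  have htail := (summable_nat_add_iff N).2 hMsum
  refine ⟨c₀ * (κ * M) ^ lam N * ∑' i, M ^ (-lam (i + N)),
    by have := htail.tsum_pos (fun i => by positivity) 0 (by positivity); positivity,
    T₀, le_rfl, fun t ht => ?_⟩
  calc _ ≤ ∑' i, c₀ * ((κ * φ t * M) ^ lam N * M ^ (-lam (i + N))) :=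
        norm_tsum_sub_sum_range_le N ((htail.mul_left _).mul_left _) fun i =>
          hterm t ht _ _ (hlammono.monotone (Nat.le_add_left N i))
    _ = _ := by
      rw [tsum_mul_left, tsum_mul_left, mul_right_comm κ,
        mul_rpow (by positivity) (hgood t ht).1.le]
      ring

theorem stmt11 {X : Type*} [NormedAddCommGroup X] [NormedSpace ℝ X] [CompleteSpace X]
    (Tstar : ℝ) (hTstar : 0 ≤ Tstar) (φ : ℝ → ℝ)
    (hφpos : ∀ t ≥ Tstar, 0 < φ t)
    (hφ0 : Tendsto φ atTop (nhds 0))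
    (lam : ℕ → ℝ) (hlampos : ∀ n, 0 < lam n) (hlammono : StrictMono lam)
    (hlamdiv : Tendsto lam atTop atTop)
    (M : ℝ) (hM : 1 < M) (hMsum : Summable (fun n : ℕ => M ^ (-lam n)))
    (ξ : ℕ → X) (c₀ κ : ℝ) (hc₀ : 0 < c₀) (hκ : 0 < κ)
    (hξ : ∀ n : ℕ, ‖ξ n‖ ≤ c₀ * κ ^ lam n) :
    ∃ T₀ ≥ Tstar,
      (∀ t ≥ T₀, Summable (fun n : ℕ => ‖ξ n‖ * φ t ^ lam n)) ∧
      TendstoUniformlyOn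
        (fun (N : ℕ) (t : ℝ) => ∑ n ∈ Finset.range N, φ t ^ lam n • ξ n)
        (fun t : ℝ => ∑' n : ℕ, φ t ^ lam n • ξ n) atTop (Set.Ici T₀) ∧
      ∀ N : ℕ, ∃ C > (0:ℝ), ∃ T ≥ T₀, ∀ t ≥ T,
        ‖(∑' n : ℕ, φ t ^ lam n • ξ n) - ∑ n ∈ Finset.range N, φ t ^ lam n • ξ n‖
          ≤ C * φ t ^ lam N :=
  stmt11_general Tstar φ hφpos hφ0 lam hlampos hlammono M hM hMsum ξ c₀ κ hc₀ hκ hξ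
end

section
/- Let T* ≥ 0, let φ and ψₙ (n ∈ ℕ) be positive functions on [T*,∞) tending to 0 as t → ∞, and suppose for each n there exists Dₙ ≥ 1 such that Dₙ^{−1} φ(t)^{λₙ} ≤ ψₙ(t) ≤ Dₙ φ(t)^{λₙ} for all t ≥ T*, where (λₙ) is a sequence of positive numbers with λₙ → ∞. Assume there exists M > 0 with Σ_{n=1}^∞ Dₙ M^{−λₙ} < ∞. Let (X,‖·‖) be a Banach space and (ξₙ) ⊂ X with ‖ξₙ‖ ≤ c₀ κ^{λₙ} for all n, for some constants c₀, κ > 0. Then there exists T₀ ≥ T* such that the series Σ_{n=1}^∞ ξₙ ψₙ(t) converges absolutely and uniformly on [T₀,∞). -/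
/-!
Once `κ φ(t) ≤ M⁻¹`, which holds for all large `t` because `φ → 0`, the `n`-th term is bounded
by `c₀ κ^{λₙ} Dₙ φ(t)^{λₙ} ≤ c₀ Dₙ M^{-λₙ}`, a summable majorant independent of `t`; the
Weierstrass M-test then gives absolute and uniform convergence.
-/

open Filter

lemma Real.rpow_le_rpow_neg_of_le_inv {a M l : ℝ} (ha : 0 ≤ a) (hM : 0 < M) (hl : 0 ≤ l)
    (h : a ≤ M⁻¹) : a ^ l ≤ M ^ (-l) := by
  rw [Real.rpow_neg hM.le, ← Real.inv_rpow hM.le]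
  exact Real.rpow_le_rpow ha h hl

lemma mul_le_of_rpow_bounds {a b c₀ κ D x M l : ℝ} (hc₀ : 0 ≤ c₀) (hκ : 0 ≤ κ) (hD : 0 ≤ D)
    (hx : 0 ≤ x) (hM : 0 < M) (hl : 0 ≤ l) (hb : 0 ≤ b) (ha : a ≤ c₀ * κ ^ l)
    (hbx : b ≤ D * x ^ l) (hκx : κ * x ≤ M⁻¹) : a * b ≤ c₀ * (D * M ^ (-l)) :=
  calc a * b ≤ c₀ * κ ^ l * (D * x ^ l) := mul_le_mul ha hbx hb (by positivity)
    _ = c₀ * (D * (κ * x) ^ l) := by rw [Real.mul_rpow hκ hx]; ring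
    _ ≤ c₀ * (D * M ^ (-l)) := by
      gcongr
      exact Real.rpow_le_rpow_neg_of_le_inv (by positivity) hM hl hκx

lemma summable_and_tendstoUniformlyOn_tsum_smul_of_le {α X : Type*} [NormedAddCommGroup X]
    [NormedSpace ℝ X] [CompleteSpace X] {S : Set α} {ψ : ℕ → α → ℝ} {ξ : ℕ → X} {u : ℕ → ℝ}
    (hu : Summable u) (hψ : ∀ n, ∀ t ∈ S, 0 ≤ ψ n t)
    (hle : ∀ n, ∀ t ∈ S, ‖ξ n‖ * ψ n t ≤ u n) :
    (∀ t ∈ S, Summable fun n => ‖ξ n‖ * ψ n t) ∧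
      TendstoUniformlyOn (fun N t => ∑ n ∈ Finset.range N, ψ n t • ξ n)
        (fun t => ∑' n, ψ n t • ξ n) atTop S := by
  refine ⟨fun t ht => hu.of_nonneg_of_le (fun n => mul_nonneg (norm_nonneg _) (hψ n t ht))
    (fun n => hle n t ht), tendstoUniformlyOn_tsum_nat hu fun n t ht => ?_⟩
  rw [norm_smul, Real.norm_of_nonneg (hψ n t ht), mul_comm]
  exact hle n t ht

theorem stmt12_general {X : Type*} [NormedAddCommGroup X] [NormedSpace ℝ X] [CompleteSpace X]
    (Tstar : ℝ)
    (φ : ℝ → ℝ) (ψ : ℕ → ℝ → ℝ)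
    (hφpos : ∀ t ≥ Tstar, 0 < φ t) (hφ0 : Tendsto φ atTop (nhds 0))
    (hψpos : ∀ n : ℕ, ∀ t ≥ Tstar, 0 < ψ n t)
    (lam : ℕ → ℝ) (hlampos : ∀ n, 0 < lam n)
    (D : ℕ → ℝ) (hD : ∀ n, 1 ≤ D n)
    (hsand : ∀ n : ℕ, ∀ t ≥ Tstar,
      (D n)⁻¹ * φ t ^ lam n ≤ ψ n t ∧ ψ n t ≤ D n * φ t ^ lam n)
    (M : ℝ) (hM : 0 < M) (hMsum : Summable (fun n : ℕ => D n * M ^ (-lam n)))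
    (ξ : ℕ → X) (c₀ κ : ℝ) (hc₀ : 0 < c₀) (hκ : 0 < κ)
    (hξ : ∀ n : ℕ, ‖ξ n‖ ≤ c₀ * κ ^ lam n) :
    ∃ T₀ ≥ Tstar,
      (∀ t ≥ T₀, Summable (fun n : ℕ => ‖ξ n‖ * ψ n t)) ∧
      TendstoUniformlyOn
        (fun (N : ℕ) (t : ℝ) => ∑ n ∈ Finset.range N, ψ n t • ξ n)
        (fun t : ℝ => ∑' n : ℕ, ψ n t • ξ n) atTop (Set.Ici T₀) := by
  have hκφ : Tendsto (fun t => κ * φ t) atTop (nhds 0) := by simpa using hφ0.const_mul κ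
  obtain ⟨T₁, hT₁⟩ := eventually_atTop.mp (hκφ.eventually (eventually_le_nhds (inv_pos.2 hM)))
  have hbound : ∀ n, ∀ t ∈ Set.Ici (max T₁ Tstar),
      ‖ξ n‖ * ψ n t ≤ c₀ * (D n * M ^ (-lam n)) := fun n t ht => by
    have htT : t ≥ Tstar := le_of_max_le_right ht
    exact mul_le_of_rpow_bounds hc₀.le hκ.le (zero_le_one.trans (hD n)) (hφpos t htT).le hM
      (hlampos n).le (hψpos n t htT).le (hξ n) (hsand n t htT).2 (hT₁ t (le_of_max_le_left ht))
  obtain ⟨hsum, hunif⟩ := summable_and_tendstoUniformlyOn_tsum_smul_of_le (hMsum.mul_left c₀)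
    (fun n t ht => (hψpos n t (le_of_max_le_right ht)).le) hbound
  exact ⟨max T₁ Tstar, le_max_right _ _, hsum, hunif⟩

theorem stmt12 {X : Type*} [NormedAddCommGroup X] [NormedSpace ℝ X] [CompleteSpace X]
    (Tstar : ℝ) (hTstar : 0 ≤ Tstar)
    (φ : ℝ → ℝ) (ψ : ℕ → ℝ → ℝ)
    (hφpos : ∀ t ≥ Tstar, 0 < φ t) (hφ0 : Tendsto φ atTop (nhds 0))
    (hψpos : ∀ n : ℕ, ∀ t ≥ Tstar, 0 < ψ n t)
    (hψ0 : ∀ n : ℕ, Tendsto (ψ n) atTop (nhds 0))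
    (lam : ℕ → ℝ) (hlampos : ∀ n, 0 < lam n)
    (hlamdiv : Tendsto lam atTop atTop)
    (D : ℕ → ℝ) (hD : ∀ n, 1 ≤ D n)
    (hsand : ∀ n : ℕ, ∀ t ≥ Tstar,
      (D n)⁻¹ * φ t ^ lam n ≤ ψ n t ∧ ψ n t ≤ D n * φ t ^ lam n)
    (M : ℝ) (hM : 0 < M) (hMsum : Summable (fun n : ℕ => D n * M ^ (-lam n)))
    (ξ : ℕ → X) (c₀ κ : ℝ) (hc₀ : 0 < c₀) (hκ : 0 < κ)
    (hξ : ∀ n : ℕ, ‖ξ n‖ ≤ c₀ * κ ^ lam n) :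
    ∃ T₀ ≥ Tstar,
      (∀ t ≥ T₀, Summable (fun n : ℕ => ‖ξ n‖ * ψ n t)) ∧
      TendstoUniformlyOn
        (fun (N : ℕ) (t : ℝ) => ∑ n ∈ Finset.range N, ψ n t • ξ n)
        (fun t : ℝ => ∑' n : ℕ, ψ n t • ξ n) atTop (Set.Ici T₀) :=
  stmt12_general Tstar φ ψ hφpos hφ0 hψpos lam hlampos D hD hsand M hM hMsum ξ c₀ κ hc₀ hκ hξ
end

section
/- Let T* ≥ 0, let φ and ψₙ (n ∈ ℕ) be positive functions on [T*,∞) tending to 0 as t → ∞, with Dₙ ≥ 1 such that Dₙ^{−1} φ(t)^{λₙ} ≤ ψₙ(t) ≤ Dₙ φ(t)^{λₙ} for all t ≥ T*, where (λₙ) are positive with λₙ → ∞ and n ↦ λₙ is injective. Assume Σ_{n=1}^∞ Dₙ M^{−λₙ} < ∞ for some M > 0. Let (X,‖·‖) be a Banach space, (ξₙ) ⊂ X with ‖ξₙ‖ ≤ c₀ κ^{λₙ} for constants c₀, κ > 0, and let f(t) = Σ_{n=1}^∞ ξₙ ψₙ(t) on [T₀,∞) (where T₀ ≥ T* is such that the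 series converges absolutely there). Let (μₙ)ₙ≥₁ be the strictly increasing enumeration of the set {λₙ : n ∈ ℕ}, and define ψ*ₙ = ψ_k and ξ*ₙ = ξ_k where k is the unique index with μₙ = λ_k. Then for every N ∈ ℕ there exist C > 0 and T ≥ T₀ such that ‖f(t) − Σ_{n=1}^N ξ*ₙ ψ*ₙ(t)‖ ≤ C φ(t)^{μ_{N+1}} for all t ≥ T. -/
/-!
Fix `N` and put `μ = λ_{e N}`; the remainder is the tail `∑_{i ≥ N} ψ_{e i} ξ_{e i}`, in which
every exponent is at least `μ`. Once `κ φ(t) ≤ M⁻¹`, each tail term obeys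
`‖ψ_k ξ_k‖ ≤ c₀ D_k (κ φ)^{λ_k} ≤ c₀ (κ M)^μ φ^μ · D_k M^{-λ_k}`,
so the tail is at most `c₀ (κ M)^μ (∑ D_k M^{-λ_k}) φ(t)^μ`.
-/

open Filter

lemma tsum_sub_sum_range_comp_eq_tsum_comp_add {G : Type*} [AddCommGroup G] [TopologicalSpace G]
    [IsTopologicalAddGroup G] [T2Space G] {g : ℕ → G} (hg : Summable g) {e : ℕ → ℕ}
    (he : Function.Bijective e) (N : ℕ) :
    ∑' n, g n - ∑ n ∈ Finset.range N, g (e n) = ∑' i, g (e (i + N)) := by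
  have hge : Summable (fun n => g (e n)) := (Equiv.ofBijective e he).summable_iff.mpr hg
  have hreindex : ∑' n, g (e n) = ∑' n, g n := (Equiv.ofBijective e he).tsum_eq g
  rw [← hreindex, ← hge.sum_add_tsum_nat_add N, add_sub_cancel_left]

lemma Real.rpow_le_rpow_mul_rpow_neg_of_le_inv {x M μ l : ℝ} (hx : 0 < x) (hM : 0 < M)
    (hxM : x ≤ M⁻¹) (hμl : μ ≤ l) : x ^ l ≤ M ^ μ * x ^ μ * M ^ (-l) := by
  calc x ^ l = x ^ μ * x ^ (l - μ) := by rw [← Real.rpow_add hx]; ring_nf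
    _ ≤ x ^ μ * M⁻¹ ^ (l - μ) := by gcongr
    _ = M ^ μ * x ^ μ * M ^ (-l) := by
      rw [Real.inv_rpow hM.le, ← Real.rpow_neg hM.le, neg_sub, sub_eq_add_neg,
        Real.rpow_add hM]
      ring

lemma norm_smul_le_of_le_rpow {X : Type*} [SeminormedAddCommGroup X] [NormedSpace ℝ X]
    {a D φ c₀ κ M l μ : ℝ} {x : X} (ha : 0 ≤ a) (haD : a ≤ D * φ ^ l)
    (hx : ‖x‖ ≤ c₀ * κ ^ l) (hD : 0 ≤ D) (hc₀ : 0 ≤ c₀) (hκ : 0 < κ) (hφ : 0 < φ)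
    (hM : 0 < M) (hφM : κ * φ ≤ M⁻¹) (hμl : μ ≤ l) :
    ‖a • x‖ ≤ c₀ * κ ^ μ * M ^ μ * φ ^ μ * (D * M ^ (-l)) := by
  have hκφ : 0 < κ * φ := mul_pos hκ hφ
  calc ‖a • x‖ = a * ‖x‖ := by rw [norm_smul, Real.norm_of_nonneg ha]
    _ ≤ D * φ ^ l * (c₀ * κ ^ l) := mul_le_mul haD hx (norm_nonneg x) (by positivity)
    _ = c₀ * D * (κ * φ) ^ l := by rw [Real.mul_rpow hκ.le hφ.le]; ring
    _ ≤ c₀ * D * (M ^ μ * (κ * φ) ^ μ * M ^ (-l)) := by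
      gcongr
      exact Real.rpow_le_rpow_mul_rpow_neg_of_le_inv hκφ hM hφM hμl
    _ = c₀ * κ ^ μ * M ^ μ * φ ^ μ * (D * M ^ (-l)) := by
      rw [Real.mul_rpow hκ.le hφ.le]; ring

lemma norm_tsum_comp_le_mul_tsum_of_injective {X : Type*} [SeminormedAddCommGroup X]
    {g : ℕ → X} {b : ℕ → ℝ} (hb : Summable b) (hb0 : ∀ n, 0 ≤ b n) {i : ℕ → ℕ}
    (hi : Function.Injective i) {A : ℝ} (hA : 0 ≤ A) (hg : ∀ n, ‖g (i n)‖ ≤ A * b (i n)) :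
    ‖∑' n, g (i n)‖ ≤ A * ∑' n, b n :=
  calc ‖∑' n, g (i n)‖ ≤ ∑' n, A * b (i n) :=
        tsum_of_norm_bounded ((hb.comp_injective hi).mul_left A).hasSum hg
    _ = A * ∑' n, b (i n) := tsum_mul_left
    _ ≤ A * ∑' n, b n :=
        mul_le_mul_of_nonneg_left (tsum_comp_le_tsum_of_inj hb hb0 hi) hA

theorem stmt13_general {X : Type*} [NormedAddCommGroup X] [NormedSpace ℝ X] [CompleteSpace X]
    (Tstar : ℝ)
    (φ : ℝ → ℝ) (ψ : ℕ → ℝ → ℝ)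
    (hφpos : ∀ t ≥ Tstar, 0 < φ t) (hφ0 : Tendsto φ atTop (nhds 0))
    (hψpos : ∀ n : ℕ, ∀ t ≥ Tstar, 0 < ψ n t)
    (lam : ℕ → ℝ)
    (D : ℕ → ℝ) (hD : ∀ n, 1 ≤ D n)
    (hsand : ∀ n : ℕ, ∀ t ≥ Tstar,
      (D n)⁻¹ * φ t ^ lam n ≤ ψ n t ∧ ψ n t ≤ D n * φ t ^ lam n)
    (M : ℝ) (hM : 0 < M) (hMsum : Summable (fun n : ℕ => D n * M ^ (-lam n)))
    (ξ : ℕ → X) (c₀ κ : ℝ) (hc₀ : 0 < c₀) (hκ : 0 < κ)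
    (hξ : ∀ n : ℕ, ‖ξ n‖ ≤ c₀ * κ ^ lam n)
    (e : ℕ → ℕ) (hebij : Function.Bijective e)
    (hemono : StrictMono (fun n => lam (e n)))
    (T₀ : ℝ) (hT₀ : T₀ ≥ Tstar)
    (habs : ∀ t ≥ T₀, Summable (fun n : ℕ => ‖ξ n‖ * ψ n t)) :
    ∀ N : ℕ, ∃ C > (0:ℝ), ∃ T ≥ T₀, ∀ t ≥ T,
      ‖(∑' n : ℕ, ψ n t • ξ n) - ∑ n ∈ Finset.range N, ψ (e n) t • ξ (e n)‖
        ≤ C * φ t ^ lam (e N) := by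
  intro N
  set μ := lam (e N)
  set S := ∑' n, D n * M ^ (-lam n)
  have hDM : ∀ n, 0 ≤ D n * M ^ (-lam n) := fun n => by have := hD n; positivity
  have hS : 0 < S := hMsum.tsum_pos hDM 0 (by have := hD 0; positivity)
  obtain ⟨T₁, hT₁⟩ := eventually_atTop.mp <|
    (hφ0.const_mul κ).eventually_le_const (by rw [mul_zero]; exact inv_pos.mpr hM)
  refine ⟨c₀ * κ ^ μ * M ^ μ * S, by positivity, max T₀ T₁, le_max_left _ _, fun t ht => ?_⟩
  have htT₀ : T₀ ≤ t := le_of_max_le_left ht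
  have htTstar : Tstar ≤ t := hT₀.trans htT₀
  have hφt : 0 < φ t := hφpos t htTstar
  have hsum : Summable (fun n => ψ n t • ξ n) :=
    Summable.of_norm <| (habs t htT₀).congr fun n => by
      rw [norm_smul, Real.norm_of_nonneg (hψpos n t htTstar).le, mul_comm]
  have htail : ∀ i, ‖ψ (e (i + N)) t • ξ (e (i + N))‖
      ≤ c₀ * κ ^ μ * M ^ μ * φ t ^ μ * (D (e (i + N)) * M ^ (-lam (e (i + N)))) := fun i =>
    norm_smul_le_of_le_rpow (hψpos _ t htTstar).le (hsand _ t htTstar).2 (hξ _)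
      (zero_le_one.trans (hD _)) hc₀.le hκ hφt hM
      (hT₁ t (le_of_max_le_right ht)) (hemono.monotone (Nat.le_add_left N i))
  have hinj : Function.Injective (fun i => e (i + N)) :=
    hebij.injective.comp (add_left_injective N)
  rw [tsum_sub_sum_range_comp_eq_tsum_comp_add hsum hebij N]
  calc _ ≤ c₀ * κ ^ μ * M ^ μ * φ t ^ μ * S :=
        norm_tsum_comp_le_mul_tsum_of_injective (g := fun n => ψ n t • ξ n) hMsum hDM hinj
          (by positivity) htail
    _ = c₀ * κ ^ μ * M ^ μ * S * φ t ^ μ := by ring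

theorem stmt13 {X : Type*} [NormedAddCommGroup X] [NormedSpace ℝ X] [CompleteSpace X]
    (Tstar : ℝ) (hTstar : 0 ≤ Tstar)
    (φ : ℝ → ℝ) (ψ : ℕ → ℝ → ℝ)
    (hφpos : ∀ t ≥ Tstar, 0 < φ t) (hφ0 : Tendsto φ atTop (nhds 0))
    (hψpos : ∀ n : ℕ, ∀ t ≥ Tstar, 0 < ψ n t)
    (hψ0 : ∀ n : ℕ, Tendsto (ψ n) atTop (nhds 0))
    (lam : ℕ → ℝ) (hlampos : ∀ n, 0 < lam n)
    (hlamdiv : Tendsto lam atTop atTop)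
    (hlaminj : Function.Injective lam)
    (D : ℕ → ℝ) (hD : ∀ n, 1 ≤ D n)
    (hsand : ∀ n : ℕ, ∀ t ≥ Tstar,
      (D n)⁻¹ * φ t ^ lam n ≤ ψ n t ∧ ψ n t ≤ D n * φ t ^ lam n)
    (M : ℝ) (hM : 0 < M) (hMsum : Summable (fun n : ℕ => D n * M ^ (-lam n)))
    (ξ : ℕ → X) (c₀ κ : ℝ) (hc₀ : 0 < c₀) (hκ : 0 < κ)
    (hξ : ∀ n : ℕ, ‖ξ n‖ ≤ c₀ * κ ^ lam n)
    (e : ℕ → ℕ) (hebij : Function.Bijective e)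
    (hemono : StrictMono (fun n => lam (e n)))
    (T₀ : ℝ) (hT₀ : T₀ ≥ Tstar)
    (habs : ∀ t ≥ T₀, Summable (fun n : ℕ => ‖ξ n‖ * ψ n t)) :
    ∀ N : ℕ, ∃ C > (0:ℝ), ∃ T ≥ T₀, ∀ t ≥ T,
      ‖(∑' n : ℕ, ψ n t • ξ n) - ∑ n ∈ Finset.range N, ψ (e n) t • ξ (e n)‖
        ≤ C * φ t ^ lam (e N) :=
  stmt13_general Tstar φ ψ hφpos hφ0 hψpos lam D hD hsand M hM hMsum ξ c₀ κ hc₀ hκ hξ e hebij hemono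
    T₀ hT₀ habs
end

section
/- Let T* ≥ 0 and let ζ, ϑ, φ be positive functions on [T*,∞) tending to 0 as t → ∞, and suppose there exist D ≥ 1 and s₁, s₂ > 0 such that D^{−1} φ(t)^{s₁} ≤ ζ(t) ≤ D φ(t)^{s₁} and D^{−1} φ(t)^{s₂} ≤ ϑ(t) ≤ D φ(t)^{s₂} for all t ≥ T*. Let (αₙ) and (βₙ) be sequences of nonnegative numbers with αₙ + βₙ → ∞, set λₙ = s₁αₙ + s₂βₙ, and assume Σ_{n=1}^∞ M^{−λₙ} < ∞ for some M > 1. Let (X,‖·‖) be a Banach space and (ξₙ) ⊂ X with ‖ξₙ‖ ≤ c₀ κ^{λₙ} for constants c₀, κ > 0. Then: (i) there exists T₀ ≥ T* such that Σ_{n=1}^∞ ξₙ ζ(t)^{αₙ} ϑ(t)^{βₙ} converges absolutely and uniformly on [T₀,∞); and (ii) if moreover n ↦ λₙ is injective, then, with (μₙ) the strictly increasing enumeration of {λₙ}, ψ*ₙ(t) = ζ(t)^{α_k} ϑ(t)^{β_k} and ξ*ₙ = ξ_k where μₙ = λ_k, and f(t) the sum of the series, for every N ∈ ℕ there exist C >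 0 and T ≥ T₀ such that ‖f(t) − Σ_{n=1}^N ξ*ₙ ψ*ₙ(t)‖ ≤ C φ(t)^{μ_{N+1}} for all t ≥ T. -/
/-!
Put `s = min s₁ s₂` and `K = κ D^{1/s}`. The upper halves of the sandwich bounds, together with
`αₙ + βₙ ≤ λₙ / s`, give `‖ζ(t)^{αₙ} ϑ(t)^{βₙ} ξₙ‖ ≤ c₀ (K φ(t))^{λₙ}`. Once `K φ(t) ≤ M⁻¹`, the
elementary inequality `r^ν ≤ (M r)^μ M^{-ν}` for `0 < r ≤ M⁻¹`, `μ ≤ ν` yields, with `μ = 0`, the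
Weierstrass majorant `c₀ M^{-λₙ}`, and with `μ = μ_{N+1}` a bound `c₀ (M K φ(t))^{μ_{N+1}} M^{-λₙ}`
on every term of the rearranged series beyond its `N`-th term, whence the remainder estimate.
-/

open Filter Finset Real

lemma Filter.Eventually.exists_ge_forall_ge_of_atTop {α : Type*} [SemilatticeSup α]
    [Nonempty α] {p : α → Prop} (h : ∀ᶠ t in atTop, p t) (a : α) : ∃ T ≥ a, ∀ t ≥ T, p t := by
  obtain ⟨T, hT⟩ := h.exists_forall_of_atTop
  exact ⟨T ⊔ a, le_sup_right, fun t ht => hT t (le_sup_left.trans ht)⟩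

lemma add_le_inv_min_mul_add_mul {s₁ s₂ a b : ℝ} (hs₁ : 0 < s₁) (hs₂ : 0 < s₂) (ha : 0 ≤ a)
    (hb : 0 ≤ b) : a + b ≤ (min s₁ s₂)⁻¹ * (s₁ * a + s₂ * b) := by
  rw [inv_mul_eq_div, le_div_iff₀ (lt_min hs₁ hs₂)]
  nlinarith [min_le_left s₁ s₂, min_le_right s₁ s₂]

namespace Real

lemma rpow_le_rpow_mul_rpow_neg {r M μ ν : ℝ} (hr : 0 < r) (hM : 0 < M) (hrM : r ≤ M⁻¹)
    (hμν : μ ≤ ν) : r ^ ν ≤ (M * r) ^ μ * M ^ (-ν) := by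
  have hMr : M * r ≤ 1 := by rwa [← le_inv_mul_iff₀ hM, mul_one]
  calc r ^ ν = (M * r) ^ ν * M ^ (-ν) := by
        rw [mul_rpow hM.le hr.le, rpow_neg hM.le, mul_comm (M ^ ν), mul_assoc,
          mul_inv_cancel₀ (rpow_pos_of_pos hM ν).ne', mul_one]
    _ ≤ (M * r) ^ μ * M ^ (-ν) := mul_le_mul_of_nonneg_right
        (rpow_le_rpow_of_exponent_ge (by positivity) hMr hμν) (by positivity)

lemma rpow_le_mul_rpow_of_le_mul_rpow {z D x s a : ℝ} (hz : 0 ≤ z) (hD : 0 ≤ D) (hx : 0 ≤ x)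
    (ha : 0 ≤ a) (h : z ≤ D * x ^ s) : z ^ a ≤ D ^ a * x ^ (s * a) :=
  calc z ^ a ≤ (D * x ^ s) ^ a := rpow_le_rpow hz h ha
    _ = D ^ a * x ^ (s * a) := by rw [mul_rpow hD (by positivity), ← rpow_mul hx]

lemma rpow_mul_rpow_le_of_le_mul_rpow {z w x D s₁ s₂ a b : ℝ} (hz : 0 ≤ z) (hw : 0 ≤ w)
    (hx : 0 < x) (hD : 1 ≤ D) (hs₁ : 0 < s₁) (hs₂ : 0 < s₂) (ha : 0 ≤ a) (hb : 0 ≤ b)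
    (hzx : z ≤ D * x ^ s₁) (hwx : w ≤ D * x ^ s₂) :
    z ^ a * w ^ b ≤ (D ^ (min s₁ s₂)⁻¹ * x) ^ (s₁ * a + s₂ * b) := by
  have hD₀ : 0 < D := by linarith
  calc z ^ a * w ^ b ≤ (D ^ a * x ^ (s₁ * a)) * (D ^ b * x ^ (s₂ * b)) :=
        mul_le_mul (rpow_le_mul_rpow_of_le_mul_rpow hz hD₀.le hx.le ha hzx)
          (rpow_le_mul_rpow_of_le_mul_rpow hw hD₀.le hx.le hb hwx) (by positivity) (by positivity)
    _ = D ^ (a + b) * x ^ (s₁ * a + s₂ * b) := by rw [rpow_add hD₀, rpow_add hx]; ring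
    _ ≤ D ^ ((min s₁ s₂)⁻¹ * (s₁ * a + s₂ * b)) * x ^ (s₁ * a + s₂ * b) := by
        gcongr
        exact add_le_inv_min_mul_add_mul hs₁ hs₂ ha hb
    _ = (D ^ (min s₁ s₂)⁻¹ * x) ^ (s₁ * a + s₂ * b) := by
        rw [rpow_mul hD₀.le, mul_rpow (by positivity) hx.le]

lemma norm_rpow_mul_rpow_smul_le {X : Type*} [NormedAddCommGroup X] [NormedSpace ℝ X]
    {z w x D s₁ s₂ a b c κ : ℝ} {v : X} (hz : 0 ≤ z) (hw : 0 ≤ w) (hx : 0 < x) (hD : 1 ≤ D)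
    (hs₁ : 0 < s₁) (hs₂ : 0 < s₂) (ha : 0 ≤ a) (hb : 0 ≤ b) (hκ : 0 < κ)
    (hzx : z ≤ D * x ^ s₁) (hwx : w ≤ D * x ^ s₂) (hv : ‖v‖ ≤ c * κ ^ (s₁ * a + s₂ * b)) :
    ‖(z ^ a * w ^ b) • v‖ ≤ c * (κ * D ^ (min s₁ s₂)⁻¹ * x) ^ (s₁ * a + s₂ * b) := by
  have hD₀ : 0 < D := by linarith
  calc ‖(z ^ a * w ^ b) • v‖ = z ^ a * w ^ b * ‖v‖ := by
        rw [norm_smul, norm_of_nonneg (by positivity)]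
    _ ≤ (D ^ (min s₁ s₂)⁻¹ * x) ^ (s₁ * a + s₂ * b) * (c * κ ^ (s₁ * a + s₂ * b)) :=
        mul_le_mul (rpow_mul_rpow_le_of_le_mul_rpow hz hw hx hD hs₁ hs₂ ha hb hzx hwx) hv
          (norm_nonneg _) (by positivity)
    _ = c * (κ * D ^ (min s₁ s₂)⁻¹ * x) ^ (s₁ * a + s₂ * b) := by
        rw [mul_assoc κ, mul_rpow hκ.le (by positivity)]
        ring

end Real

lemma norm_tsum_sub_sum_range_equiv_le {X : Type*} [NormedAddCommGroup X] [CompleteSpace X]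
    {g : ℕ → X} {u : ℕ → ℝ} (hu : Summable u) (hu₀ : ∀ n, 0 ≤ u n) (e : ℕ ≃ ℕ) (N : ℕ)
    (hgu : ∀ n ≥ N, ‖g (e n)‖ ≤ u (e n)) :
    ‖∑' n, g n - ∑ n ∈ range N, g (e n)‖ ≤ ∑' n, u n := by
  have htail_inj : Function.Injective fun i => e (i + N) := e.injective.comp (add_left_injective N)
  have hutail : Summable fun i => u (e (i + N)) := hu.comp_injective htail_inj
  have hgtail : ∀ i, ‖g (e (i + N))‖ ≤ u (e (i + N)) := fun i => hgu _ (Nat.le_add_left N i)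
  have hge : Summable (g ∘ e) := (summable_nat_add_iff N).mp (hutail.of_norm_bounded hgtail)
  have hrem : ∑' n, g n - ∑ n ∈ range N, g (e n) = ∑' i, g (e (i + N)) := by
    have hsplit := hge.sum_add_tsum_nat_add N
    simp only [Function.comp_apply] at hsplit
    rw [← e.tsum_eq g, ← hsplit, add_sub_cancel_left]
  calc ‖∑' n, g n - ∑ n ∈ range N, g (e n)‖ ≤ ∑' i, u (e (i + N)) :=
        hrem ▸ tsum_of_norm_bounded hutail.hasSum hgtail
    _ ≤ ∑' n, u n :=
        hutail.tsum_le_tsum_of_inj _ htail_inj (fun n _ => hu₀ n) (fun _ => le_rfl) hu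

lemma norm_tsum_sub_sum_range_equiv_le_of_le_rpow {X : Type*} [NormedAddCommGroup X]
    [CompleteSpace X] {f : ℕ → X} {lam : ℕ → ℝ} {c r M : ℝ} (hc : 0 ≤ c) (hr : 0 < r)
    (hM : 0 < M) (hrM : r ≤ M⁻¹) (hMsum : Summable fun n => M ^ (-lam n))
    (hf : ∀ n, ‖f n‖ ≤ c * r ^ lam n) (e : ℕ ≃ ℕ) (he : Monotone (lam ∘ e)) (N : ℕ) :
    ‖∑' n, f n - ∑ n ∈ range N, f (e n)‖ ≤ c * (M * r) ^ lam (e N) * ∑' n, M ^ (-lam n) := by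
  rw [← tsum_mul_left]
  refine norm_tsum_sub_sum_range_equiv_le (hMsum.mul_left _) (fun n => by positivity) e N
    fun n hn => (hf (e n)).trans ?_
  rw [mul_assoc]
  exact mul_le_mul_of_nonneg_left (rpow_le_rpow_mul_rpow_neg hr hM hrM (he hn)) hc

theorem stmt14_general {X : Type*} [NormedAddCommGroup X] [NormedSpace ℝ X] [CompleteSpace X]
    (Tstar : ℝ)
    (ζ ϑ φ : ℝ → ℝ)
    (hζpos : ∀ t ≥ Tstar, 0 < ζ t) (hϑpos : ∀ t ≥ Tstar, 0 < ϑ t)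
    (hφpos : ∀ t ≥ Tstar, 0 < φ t)
    (hφ0 : Tendsto φ atTop (nhds 0))
    (D : ℝ) (hD : 1 ≤ D) (s₁ s₂ : ℝ) (hs₁ : 0 < s₁) (hs₂ : 0 < s₂)
    (hζsand : ∀ t ≥ Tstar, D⁻¹ * φ t ^ s₁ ≤ ζ t ∧ ζ t ≤ D * φ t ^ s₁)
    (hϑsand : ∀ t ≥ Tstar, D⁻¹ * φ t ^ s₂ ≤ ϑ t ∧ ϑ t ≤ D * φ t ^ s₂)
    (α β : ℕ → ℝ) (hα : ∀ n, 0 ≤ α n) (hβ : ∀ n, 0 ≤ β n)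
    (lam : ℕ → ℝ) (hlam : ∀ n, lam n = s₁ * α n + s₂ * β n)
    (M : ℝ) (hM : 1 < M) (hMsum : Summable (fun n : ℕ => M ^ (-lam n)))
    (ξ : ℕ → X) (c₀ κ : ℝ) (hc₀ : 0 < c₀) (hκ : 0 < κ)
    (hξ : ∀ n : ℕ, ‖ξ n‖ ≤ c₀ * κ ^ lam n) :
    (∃ T₀ ≥ Tstar,
      (∀ t ≥ T₀, Summable (fun n : ℕ => ‖ξ n‖ * (ζ t ^ α n * ϑ t ^ β n))) ∧
      TendstoUniformlyOn
        (fun (N : ℕ) (t : ℝ) => ∑ n ∈ Finset.range N, (ζ t ^ α n * ϑ t ^ β n) • ξ n)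
        (fun t : ℝ => ∑' n : ℕ, (ζ t ^ α n * ϑ t ^ β n) • ξ n) atTop (Set.Ici T₀)) ∧
    (Function.Injective lam →
      ∀ e : ℕ → ℕ, Function.Bijective e → StrictMono (fun n => lam (e n)) →
      ∀ T₀ ≥ Tstar,
        (∀ t ≥ T₀, Summable (fun n : ℕ => ‖ξ n‖ * (ζ t ^ α n * ϑ t ^ β n))) →
        ∀ N : ℕ, ∃ C > (0:ℝ), ∃ T ≥ T₀, ∀ t ≥ T,
          ‖(∑' n : ℕ, (ζ t ^ α n * ϑ t ^ β n) • ξ n)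
              - ∑ n ∈ Finset.range N, (ζ t ^ α (e n) * ϑ t ^ β (e n)) • ξ (e n)‖
            ≤ C * φ t ^ lam (e N)) := by
  have hM₀ : 0 < M := by linarith
  have hD₀ : 0 < D := by linarith
  obtain ⟨K, hK, hterm⟩ : ∃ K > 0, ∀ t ≥ Tstar, ∀ n,
      ‖(ζ t ^ α n * ϑ t ^ β n) • ξ n‖ ≤ c₀ * (K * φ t) ^ lam n :=
    ⟨κ * D ^ (min s₁ s₂)⁻¹, by positivity, fun t ht n => hlam n ▸ norm_rpow_mul_rpow_smul_le
      (hζpos t ht).le (hϑpos t ht).le (hφpos t ht) hD hs₁ hs₂ (hα n) (hβ n) hκ (hζsand t ht).2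
      (hϑsand t ht).2 (hlam n ▸ hξ n)⟩
  obtain ⟨T₁, hT₁, hsmall⟩ : ∃ T₁ ≥ Tstar, ∀ t ≥ T₁, K * φ t ≤ M⁻¹ := by
    have hKφ : Tendsto (fun t => K * φ t) atTop (nhds 0) := by simpa using hφ0.const_mul K
    exact (hKφ.eventually (ge_mem_nhds (by positivity))).exists_ge_forall_ge_of_atTop Tstar
  have hKφ : ∀ t ≥ T₁, 0 < K * φ t := fun t ht => mul_pos hK (hφpos t (hT₁.trans ht))
  have hmajorant : ∀ n, ∀ t ∈ Set.Ici T₁, ‖(ζ t ^ α n * ϑ t ^ β n) • ξ n‖ ≤ c₀ * M ^ (-lam n) := by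
    intro n t ht
    have hlam₀ : 0 ≤ lam n := by rw [hlam]; have := hα n; have := hβ n; positivity
    simpa using (hterm t (hT₁.trans ht) n).trans (mul_le_mul_of_nonneg_left
      (rpow_le_rpow_mul_rpow_neg (hKφ t ht) hM₀ (hsmall t ht) hlam₀) hc₀.le)
  refine ⟨⟨T₁, hT₁, fun t ht => (hMsum.mul_left c₀).of_norm_bounded fun n => ?_,
    tendstoUniformlyOn_tsum_nat (hMsum.mul_left c₀) hmajorant⟩, ?_⟩
  · simpa [norm_smul, mul_comm] using hmajorant n t ht
  intro _ e he hmono T₀ _ _ N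
  have hS := hMsum.tsum_pos (fun n => by positivity) 0 (by positivity)
  refine ⟨c₀ * (M * K) ^ lam (e N) * ∑' n, M ^ (-lam n), by positivity, max T₀ T₁,
    le_max_left _ _, fun t ht => ?_⟩
  have hT₁t : T₁ ≤ t := le_of_max_le_right ht
  calc _ ≤ c₀ * (M * (K * φ t)) ^ lam (e N) * ∑' n, M ^ (-lam n) :=
        norm_tsum_sub_sum_range_equiv_le_of_le_rpow hc₀.le (hKφ t hT₁t) hM₀ (hsmall t hT₁t)
          hMsum (hterm t (hT₁.trans hT₁t)) (Equiv.ofBijective e he) hmono.monotone N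
    _ = _ := by
        rw [← mul_assoc M, mul_rpow (by positivity) (hφpos t (hT₁.trans hT₁t)).le]
        ring

theorem stmt14 {X : Type*} [NormedAddCommGroup X] [NormedSpace ℝ X] [CompleteSpace X]
    (Tstar : ℝ) (hTstar : 0 ≤ Tstar)
    (ζ ϑ φ : ℝ → ℝ)
    (hζpos : ∀ t ≥ Tstar, 0 < ζ t) (hϑpos : ∀ t ≥ Tstar, 0 < ϑ t)
    (hφpos : ∀ t ≥ Tstar, 0 < φ t)
    (hζ0 : Tendsto ζ atTop (nhds 0)) (hϑ0 : Tendsto ϑ atTop (nhds 0))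
    (hφ0 : Tendsto φ atTop (nhds 0))
    (D : ℝ) (hD : 1 ≤ D) (s₁ s₂ : ℝ) (hs₁ : 0 < s₁) (hs₂ : 0 < s₂)
    (hζsand : ∀ t ≥ Tstar, D⁻¹ * φ t ^ s₁ ≤ ζ t ∧ ζ t ≤ D * φ t ^ s₁)
    (hϑsand : ∀ t ≥ Tstar, D⁻¹ * φ t ^ s₂ ≤ ϑ t ∧ ϑ t ≤ D * φ t ^ s₂)
    (α β : ℕ → ℝ) (hα : ∀ n, 0 ≤ α n) (hβ : ∀ n, 0 ≤ β n)
    (hαβ : Tendsto (fun n => α n + β n) atTop atTop)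
    (lam : ℕ → ℝ) (hlam : ∀ n, lam n = s₁ * α n + s₂ * β n)
    (M : ℝ) (hM : 1 < M) (hMsum : Summable (fun n : ℕ => M ^ (-lam n)))
    (ξ : ℕ → X) (c₀ κ : ℝ) (hc₀ : 0 < c₀) (hκ : 0 < κ)
    (hξ : ∀ n : ℕ, ‖ξ n‖ ≤ c₀ * κ ^ lam n) :
    (∃ T₀ ≥ Tstar,
      (∀ t ≥ T₀, Summable (fun n : ℕ => ‖ξ n‖ * (ζ t ^ α n * ϑ t ^ β n))) ∧
      TendstoUniformlyOn
        (fun (N : ℕ) (t : ℝ) => ∑ n ∈ Finset.range N, (ζ t ^ α n * ϑ t ^ β n) • ξ n)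
        (fun t : ℝ => ∑' n : ℕ, (ζ t ^ α n * ϑ t ^ β n) • ξ n) atTop (Set.Ici T₀)) ∧
    (Function.Injective lam →
      ∀ e : ℕ → ℕ, Function.Bijective e → StrictMono (fun n => lam (e n)) →
      ∀ T₀ ≥ Tstar,
        (∀ t ≥ T₀, Summable (fun n : ℕ => ‖ξ n‖ * (ζ t ^ α n * ϑ t ^ β n))) →
        ∀ N : ℕ, ∃ C > (0:ℝ), ∃ T ≥ T₀, ∀ t ≥ T,
          ‖(∑' n : ℕ, (ζ t ^ α n * ϑ t ^ β n) • ξ n)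
              - ∑ n ∈ Finset.range N, (ζ t ^ α (e n) * ϑ t ^ β (e n)) • ξ (e n)‖
            ≤ C * φ t ^ lam (e N)) :=
  stmt14_general Tstar ζ ϑ φ hζpos hϑpos hφpos hφ0 D hD s₁ s₂ hs₁ hs₂ hζsand hϑsand α β hα hβ lam
    hlam M hM hMsum ξ c₀ κ hc₀ hκ hξ
end
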